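/- (Reparametrization lemma for st-graphs.) Let V be a finite type with two distinct distinguished elements s (source) and t (terminal), and let φ, φ' : V → V → ℝ be two sets of edge capacities such that δ = φ' − φ is antisymmetric (δ i j = −δ j i for all i, j). Then the following are equivalent: (i) φ and φ' represent the same energy function exactly, i.e. for every subset S ⊆ V with s ∈ S and t ∉ S, ∑_{i ∈ S} ∑_{j ∉ S} φ i j = ∑_{i ∈ S} ∑_{j ∉ S} φ' i j; (ii) δ is a null flow, i.e. ∑_{j ∈ V} δ j i = 0 for every i ∈ V. -/

import Mathlib

/-!
The difference of the two cut costs of `S` is the flow of `δ = φ' - φ` across the cut. As `δ`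
is antisymmetric, its total over `S × S` vanishes, so this flow equals the net outflow
`∑ i ∈ S, ∑ j, δ i j` of `S`; hence null flows give equal cut costs. Conversely, the cuts `{s}`
and `{s, i}` force the net outflow of every `i ≠ t` to vanish, and the cut `{t}ᶜ`, together
with the vanishing of the net outflow of all of `V`, forces that of `t` to vanish.
-/

open Finset

section Antisymm

variable {V M : Type*} [AddCommGroup M] {δ : V → V → M}

theorem sum_left_eq_neg_sum_right_of_antisymm [Fintype V] (hδ : ∀ i j, δ i j = -δ j i)
    (i : V) : ∑ j, δ j i = -∑ j, δ i j := by
  rw [← sum_neg_distrib]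
  exact sum_congr rfl fun j _ => hδ j i

variable [IsAddTorsionFree M]

theorem sum_sum_eq_zero_of_antisymm (hδ : ∀ i j, δ i j = -δ j i) (S : Finset V) :
    ∑ i ∈ S, ∑ j ∈ S, δ i j = 0 := by
  refine self_eq_neg.mp ?_
  calc ∑ i ∈ S, ∑ j ∈ S, δ i j = ∑ i ∈ S, ∑ j ∈ S, -δ j i := by simp only [← hδ]
    _ = -∑ i ∈ S, ∑ j ∈ S, δ i j := by rw [sum_comm]; simp only [sum_neg_distrib]

theorem sum_sum_compl_eq_sum_sum_of_antisymm [Fintype V] [DecidableEq V]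
    (hδ : ∀ i j, δ i j = -δ j i) (S : Finset V) :
    ∑ i ∈ S, ∑ j ∈ Sᶜ, δ i j = ∑ i ∈ S, ∑ j, δ i j := by
  simp only [← sum_add_sum_compl S (δ _), sum_add_distrib, sum_sum_eq_zero_of_antisymm hδ,
    zero_add]

end Antisymm

theorem eq_zero_of_sum_eq_zero_of_forall_cut {V M : Type*} [Fintype V] [DecidableEq V]
    [AddCommGroup M] {f : V → M} {s t : V} (hst : s ≠ t) (htot : ∑ i, f i = 0)
    (hcut : ∀ S : Finset V, s ∈ S → t ∉ S → ∑ i ∈ S, f i = 0) (i : V) : f i = 0 := by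
  by_cases hit : i = t
  · subst hit
    rwa [Fintype.sum_eq_add_sum_compl i, hcut {i}ᶜ (by simpa using hst) (by simp), add_zero]
      at htot
  have hs : f s = 0 := by simpa using hcut {s} (mem_singleton_self s) (by simpa using hst.symm)
  by_cases his : i = s
  · exact his ▸ hs
  have hsi := hcut {s, i} (by simp) (by simp [hst.symm, Ne.symm hit])
  rwa [sum_pair (Ne.symm his), hs, zero_add] at hsi

/-- Reparametrization lemma for `st`-graphs: two capacity functions whose
difference is antisymmetric represent the same energy function exactly
(equal cut costs for all `s`-`t` cuts) iff their difference is a null flow. -/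
theorem same_energy_iff_diff_null_flow
    {V : Type*} [Fintype V] [DecidableEq V] (s t : V) (hst : s ≠ t)
    (φ φ' : V → V → ℝ)
    (hanti : ∀ i j, φ' i j - φ i j = -(φ' j i - φ j i)) :
    (∀ S : Finset V, s ∈ S → t ∉ S →
        ∑ i ∈ S, ∑ j ∈ Sᶜ, φ i j = ∑ i ∈ S, ∑ j ∈ Sᶜ, φ' i j) ↔
      (∀ i, ∑ j, (φ' j i - φ j i) = 0) := by
  set δ : V → V → ℝ := fun i j => φ' i j - φ i j
  have hcut (S : Finset V) :
      ∑ i ∈ S, ∑ j ∈ Sᶜ, φ i j = ∑ i ∈ S, ∑ j ∈ Sᶜ, φ' i j ↔ ∑ i ∈ S, ∑ j, δ i j = 0 := by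
    rw [← sum_sum_compl_eq_sum_sum_of_antisymm hanti, eq_comm, ← sub_eq_zero]
    simp only [sum_sub_distrib]
  simp only [hcut, sum_left_eq_neg_sum_right_of_antisymm hanti, neg_eq_zero]
  exact ⟨eq_zero_of_sum_eq_zero_of_forall_cut hst (sum_sum_eq_zero_of_antisymm hanti univ),
    fun h _ _ _ => sum_eq_zero fun i _ => h i⟩
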